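/- arXiv:2603.25018 — 3 statements merged into one kernel-verified Lean document; each statement's English description precedes it below -/
import Mathlib

section
/- The sum of effective-resistance marginals over all edges of a connected weighted graph equals n − 1: Σ_{e={u,v}∈E} w_e · (1_u − 1_v)ᵀ L⁺ (1_u − 1_v) = |V| − 1 (Foster's theorem, weighted form). -/
open scoped Classical
open Finset Matrix

private lemma foster_trace_mul_vecMulVec {V : Type*} [Fintype V] (A : Matrix V V ℝ) (a b : V → ℝ) :
    (A * vecMulVec a b).trace = b ⬝ᵥ A.mulVec a := by
  simp only [Matrix.trace, Matrix.diag, Matrix.mul_apply, vecMulVec_apply, dotProduct,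
    Matrix.mulVec, Finset.mul_sum]
  refine Finset.sum_congr rfl fun i _ => Finset.sum_congr rfl fun j _ => by ring

private lemma foster_sum_mulVec {V W : Type*} [Fintype V] [Fintype W] {s : Finset W}
    (M : W → Matrix V V ℝ) (x : V → ℝ) : (∑ i ∈ s, M i) *ᵥ x = ∑ i ∈ s, M i *ᵥ x := by
  ext j
  simp only [Matrix.mulVec, dotProduct, Matrix.sum_apply, Finset.sum_apply, Finset.sum_mul]
  exact Finset.sum_comm

private lemma foster_vecMulVec_mulVec {V : Type*} [Fintype V] (a b x : V → ℝ) :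
    vecMulVec a b *ᵥ x = (b ⬝ᵥ x) • a := by
  ext j
  simp [Matrix.mulVec, vecMulVec_apply, dotProduct, Finset.mul_sum, mul_comm, mul_left_comm]

private lemma foster_dot_sum {V W : Type*} [Fintype V] [Fintype W] {s : Finset W}
    (x : V → ℝ) (f : W → (V → ℝ)) : x ⬝ᵥ (∑ i ∈ s, f i) = ∑ i ∈ s, x ⬝ᵥ f i := by
  simp only [dotProduct, Finset.sum_apply, Finset.mul_sum]
  exact Finset.sum_comm

private lemma foster_single_sub_dot {V : Type*} [Fintype V] [DecidableEq V] (u v : V) (x : V → ℝ) :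
    ((Pi.single u 1 : V → ℝ) - Pi.single v 1) ⬝ᵥ x = x u - x v := by
  simp [sub_dotProduct, Pi.single_apply]

/-- Foster's theorem (weighted form): the sum over all edges of
`w_e (1_u - 1_v)ᵀ L⁺ (1_u - 1_v)` equals `|V| - 1` for a connected weighted graph. -/
theorem stmt3 {V : Type*} [Fintype V] [DecidableEq V]
    (G : SimpleGraph V) (hG : G.Connected)
    (w : Sym2 V → ℝ) (hw : ∀ e ∈ G.edgeSet, 0 < w e)
    (L : Matrix V V ℝ)
    (hL : L = (1 / 2 : ℝ) • ∑ u : V, ∑ v : V,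
      (if G.Adj u v then w s(u, v) •
        vecMulVec ((Pi.single u 1 : V → ℝ) - Pi.single v 1)
          ((Pi.single u 1 : V → ℝ) - Pi.single v 1) else 0))
    (Lp : Matrix V V ℝ)
    (h1 : L * Lp * L = L) (h2 : Lp * L * Lp = Lp)
    (h3 : (L * Lp)ᵀ = L * Lp) (h4 : (Lp * L)ᵀ = Lp * L) :
    (1 / 2 : ℝ) * ∑ u : V, ∑ v : V,
        (if G.Adj u v then w s(u, v) * (((Pi.single u 1 : V → ℝ) - Pi.single v 1) ⬝ᵥ
          Lp.mulVec ((Pi.single u 1 : V → ℝ) - Pi.single v 1)) else 0)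
      = (Fintype.card V : ℝ) - 1 := by
  classical
  set d : V → V → (V → ℝ) := fun u v => (Pi.single u 1 : V → ℝ) - Pi.single v 1 with hd
  -- Step 1: the LHS is the trace of `Lp * L`.
  have key : ∀ u v : V,
      (Lp * (if G.Adj u v then w s(u, v) • vecMulVec (d u v) (d u v) else 0)).trace
        = if G.Adj u v then w s(u, v) * (d u v ⬝ᵥ Lp.mulVec (d u v)) else 0 := by
    intro u v
    split_ifs with h
    · rw [Matrix.mul_smul, Matrix.trace_smul, foster_trace_mul_vecMulVec, smul_eq_mul]
    · simp
  have hLHS : (1 / 2 : ℝ) * ∑ u : V, ∑ v : V,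
      (if G.Adj u v then w s(u, v) * (d u v ⬝ᵥ Lp.mulVec (d u v)) else 0)
        = (Lp * L).trace := by
    rw [hL, Matrix.mul_smul, Matrix.trace_smul, smul_eq_mul]
    congr 1
    rw [Matrix.mul_sum, Matrix.trace_sum]
    refine Finset.sum_congr rfl fun u _ => ?_
    rw [Matrix.mul_sum, Matrix.trace_sum]
    exact Finset.sum_congr rfl fun v _ => (key u v).symm
  rw [hLHS]
  -- Step 2: `Lp * L` is idempotent, so its trace is its rank.
  have hPP : (Lp * L) * (Lp * L) = Lp * L := by
    calc (Lp * L) * (Lp * L) = (Lp * L * Lp) * L := by noncomm_ring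
    _ = Lp * L := by rw [h2]
  have hcomp : (Lp * L).mulVecLin ∘ₗ (Lp * L).mulVecLin = (Lp * L).mulVecLin := by
    rw [← Matrix.mulVecLin_mul, hPP]
  have hproj : LinearMap.IsProj (LinearMap.range (Lp * L).mulVecLin) (Lp * L).mulVecLin := by
    constructor
    · intro x; exact LinearMap.mem_range_self _ x
    · rintro x ⟨y, rfl⟩
      exact congrFun (congrArg DFunLike.coe hcomp) y
  have htrace : (Lp * L).trace = (Matrix.rank (Lp * L) : ℝ) := by
    have := hproj.trace (R := ℝ)
    rw [Matrix.rank]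
    rw [← this]
    rw [LinearMap.trace_eq_matrix_trace ℝ (Pi.basisFun ℝ V)]
    congr 1
    ext i j
    simp [LinearMap.toMatrix_apply, Matrix.mulVecLin_apply, Matrix.mulVec_single,
      Matrix.mul_apply, Matrix.mulVec, dotProduct, mul_comm]
  -- Step 3: rank (Lp * L) = rank L
  have hrank : Matrix.rank (Lp * L) = Matrix.rank L := by
    refine le_antisymm (Matrix.rank_mul_le_right Lp L) ?_
    have : L * (Lp * L) = L := by rw [← mul_assoc, h1]
    calc Matrix.rank L = Matrix.rank (L * (Lp * L)) := by rw [this]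
    _ ≤ Matrix.rank (Lp * L) := Matrix.rank_mul_le_right _ _
  -- Step 4: ker L = span of the constant vector, so rank L = card V - 1
  have hone : L *ᵥ (fun _ => (1 : ℝ)) = 0 := by
    rw [hL, Matrix.smul_mulVec, foster_sum_mulVec]
    have : ∀ u : V, (∑ v : V, if G.Adj u v then w s(u, v) •
        vecMulVec (d u v) (d u v) else 0) *ᵥ (fun _ => (1 : ℝ)) = 0 := by
      intro u
      rw [foster_sum_mulVec]
      refine Finset.sum_eq_zero fun v _ => ?_
      split_ifs with h
      · rw [Matrix.smul_mulVec, foster_vecMulVec_mulVec, foster_single_sub_dot]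
        simp
      · exact Matrix.zero_mulVec _
    rw [Finset.sum_congr rfl fun u _ => this u]
    simp
  have hker : LinearMap.ker L.mulVecLin = Submodule.span ℝ {(fun _ => (1 : ℝ) : V → ℝ)} := by
    apply le_antisymm
    · intro x hx
      rw [LinearMap.mem_ker, Matrix.mulVecLin_apply] at hx
      have hquad : x ⬝ᵥ L *ᵥ x = (1 / 2 : ℝ) * ∑ u : V, ∑ v : V,
          (if G.Adj u v then w s(u, v) * (x u - x v) ^ 2 else 0) := by
        rw [hL, Matrix.smul_mulVec, foster_sum_mulVec, dotProduct_smul, smul_eq_mul]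
        congr 1
        rw [foster_dot_sum]
        refine Finset.sum_congr rfl fun u _ => ?_
        rw [foster_sum_mulVec, foster_dot_sum]
        refine Finset.sum_congr rfl fun v _ => ?_
        split_ifs with h
        · rw [Matrix.smul_mulVec, foster_vecMulVec_mulVec, foster_single_sub_dot,
            dotProduct_smul, dotProduct_smul, smul_eq_mul, smul_eq_mul,
            dotProduct_comm, foster_single_sub_dot]
          ring
        · simp
      have hzero : ∑ u : V, ∑ v : V,
          (if G.Adj u v then w s(u, v) * (x u - x v) ^ 2 else 0) = 0 := by
        have := hquad
        rw [hx] at this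
        simp only [dotProduct_zero] at this
        linarith
      have hnonneg : ∀ u ∈ Finset.univ (α := V), ∀ v ∈ Finset.univ (α := V),
          (0 : ℝ) ≤ if G.Adj u v then w s(u, v) * (x u - x v) ^ 2 else 0 := by
        intro u _ v _
        split_ifs with h
        · exact mul_nonneg (hw _ (G.mem_edgeSet.mpr h)).le (sq_nonneg _)
        · exact le_refl 0
      have hadj : ∀ u v : V, G.Adj u v → x u = x v := by
        intro u v h
        have h1' := (Finset.sum_eq_zero_iff_of_nonneg
          (fun u hu => Finset.sum_nonneg (hnonneg u hu))).mp hzero u (Finset.mem_univ u)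
        have h2' := (Finset.sum_eq_zero_iff_of_nonneg (hnonneg u (Finset.mem_univ u))).mp
          h1' v (Finset.mem_univ v)
        rw [if_pos h] at h2'
        have hwpos := hw _ (G.mem_edgeSet.mpr h)
        have : (x u - x v) ^ 2 = 0 := by
          by_contra hne
          exact hne (by nlinarith [sq_nonneg (x u - x v)])
        have := pow_eq_zero_iff (n := 2) (by norm_num) |>.mp this
        linarith [this]
      have hreach : ∀ u v : V, x u = x v := by
        intro u v
        obtain ⟨p⟩ := hG u v
        induction p with
        | nil => rfl
        | cons h _ ih => exact (hadj _ _ h).trans ih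
      obtain ⟨v₀⟩ := hG.nonempty
      have : x = x v₀ • (fun _ => (1 : ℝ)) := by
        funext i
        simp [hreach i v₀]
      rw [this]
      exact Submodule.smul_mem _ _ (Submodule.mem_span_singleton_self _)
    · rw [Submodule.span_le, Set.singleton_subset_iff]
      rw [SetLike.mem_coe, LinearMap.mem_ker]
      simpa [Matrix.mulVecLin_apply] using hone
  have hkerrank : Module.finrank ℝ (LinearMap.ker L.mulVecLin) = 1 := by
    rw [hker]
    apply finrank_span_singleton
    intro hc
    obtain ⟨v₀⟩ := hG.nonempty
    have := congrFun hc v₀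
    simpa using this
  have hrn := LinearMap.finrank_range_add_finrank_ker L.mulVecLin
  rw [hkerrank, Module.finrank_pi] at hrn
  have hrL : Matrix.rank L + 1 = Fintype.card V := by
    rw [Matrix.rank]
    exact hrn
  rw [htrace, hrank]
  have : (Matrix.rank L : ℝ) + 1 = (Fintype.card V : ℝ) := by
    exact_mod_cast congrArg (Nat.cast : ℕ → ℝ) hrL
  linarith
end

section
/- Let G be a graph in which, under nonnegative edge weights q, every nonempty vertex subset S has weighted density (Σ_{e∈E(S)} q_e)/|S| strictly less than α. If at least half the edges e of G satisfy q_e ≥ 8α/d_u and q_e ≥ 8α/d_v for both endpoints u,v (where d_v is the degree of v in G), then a contradiction ensues; equivalently, in every such graph, fewer than half the edges fail the condition q_e < 8α/d_v at both endpoints. -/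
open scoped Classical
open Finset

/-!
Let `H ≤ G` be the graph of heavy edges. If `2 |E(H)| ≥ |E(G)|` then `∑ d_G ≤ 2 ∑ d_H`, and
deleting one by one the vertices `v` of `S` with `4 d_{H[S]}(v) < d_G(v)`, or with no `H`-neighbour
in `S`, preserves `∑_S d_G ≤ 2 ∑_S d_{H[S]}`. It ends at a nonempty `T` in which every vertex `v`
has at least `d_G(v) / 4` heavy neighbours, joined to `v` by edges of weight `≥ 8α / d_G(v)`.
So every vertex carries weight `≥ 2α` inside `T`, and `T` has density `≥ α`.
-/

namespace SimpleGraph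

variable {V : Type*} (H : SimpleGraph V) [DecidableRel H.Adj]

def degreeIn (S : Finset V) (v : V) : ℕ := #{u ∈ S | H.Adj v u}

variable {H}

lemma degreeIn_erase_self [DecidableEq V] (S : Finset V) (v : V) :
    H.degreeIn (S.erase v) v = H.degreeIn S v := by
  unfold degreeIn
  rw [filter_erase, erase_eq_of_notMem (by simp)]

lemma degreeIn_eq_degreeIn_erase_add [DecidableEq V] {S : Finset V} {v : V} (hv : v ∈ S)
    (u : V) :
    H.degreeIn S u = H.degreeIn (S.erase v) u + if H.Adj u v then 1 else 0 := by
  unfold degreeIn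
  rw [filter_erase]
  split_ifs with h
  · rw [card_erase_add_one (mem_filter.2 ⟨hv, h⟩)]
  · rw [erase_eq_of_notMem (by simp [h]), add_zero]

lemma sum_ite_adj_eq_degreeIn (S : Finset V) (v : V) :
    (∑ u ∈ S, if H.Adj u v then 1 else 0) = H.degreeIn S v := by
  simp only [sum_boole, Nat.cast_id, degreeIn, H.adj_comm]

lemma sum_degreeIn_eq_sum_degreeIn_erase_add [DecidableEq V] {S : Finset V} {v : V}
    (hv : v ∈ S) :
    ∑ u ∈ S, H.degreeIn S u =
      ∑ u ∈ S.erase v, H.degreeIn (S.erase v) u + 2 * H.degreeIn S v := by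
  rw [← add_sum_erase S _ hv, sum_congr rfl fun u _ => degreeIn_eq_degreeIn_erase_add hv u,
    sum_add_distrib, sum_ite_adj_eq_degreeIn, degreeIn_erase_self]
  ring

theorem exists_nonempty_subset_forall_le_mul_degreeIn [DecidableEq V] (f : V → ℕ) (k : ℕ)
    (S : Finset V) (hpos : 0 < ∑ v ∈ S, H.degreeIn S v)
    (hle : ∑ v ∈ S, f v ≤ k * ∑ v ∈ S, H.degreeIn S v) :
    ∃ T ⊆ S, T.Nonempty ∧ ∀ v ∈ T, 0 < H.degreeIn T v ∧ f v ≤ 2 * k * H.degreeIn T v := by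
  induction S using strongInduction with
  | H S ih =>
    by_cases hbad : ∃ v ∈ S, H.degreeIn S v = 0 ∨ 2 * k * H.degreeIn S v < f v
    · obtain ⟨v, hv, hv'⟩ := hbad
      rw [sum_degreeIn_eq_sum_degreeIn_erase_add hv] at hpos hle
      rw [← add_sum_erase S f hv, mul_add] at hle
      have hpos' : 0 < ∑ u ∈ S.erase v, H.degreeIn (S.erase v) u := by
        refine Nat.pos_of_ne_zero fun h0 => ?_
        rw [h0] at hpos hle
        rcases hv' with h | h <;> nlinarith [Nat.zero_le (∑ u ∈ S.erase v, f u)]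
      obtain ⟨T, hTS, hT⟩ :=
        ih _ (erase_ssubset hv) hpos' (by rcases hv' with h | h <;> nlinarith)
      exact ⟨T, hTS.trans (erase_subset v S), hT⟩
    · push Not at hbad
      obtain ⟨v, hv, -⟩ := exists_ne_zero_of_sum_ne_zero hpos.ne'
      exact ⟨S, subset_rfl, ⟨v, hv⟩,
        fun v hv => ⟨Nat.pos_of_ne_zero (hbad v hv).1, (hbad v hv).2⟩⟩

lemma sum_degreeIn_univ [Fintype V] : ∑ v, H.degreeIn univ v = 2 * #H.edgeFinset := by
  rw [← H.sum_degrees_eq_twice_card_edges]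
  refine sum_congr rfl fun v _ => ?_
  rw [← card_neighborFinset_eq_degree, neighborFinset_eq_filter]
  rfl

lemma div_le_sum_ite_adj [Fintype V] {G : SimpleGraph V} [DecidableRel G.Adj]
    {q : Sym2 V → ℝ} {c : ℝ} {m : ℕ} {T : Finset V} {u : V}
    (hHG : H ≤ G) (hq : ∀ e, 0 ≤ q e) (hc : 0 ≤ c)
    (hheavy : ∀ v, H.Adj u v → c / G.degree u ≤ q s(u, v))
    (hpos : 0 < H.degreeIn T u) (hdeg : G.degree u ≤ m * H.degreeIn T u) :
    c / m ≤ ∑ v ∈ T, if G.Adj u v then q s(u, v) else 0 := by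
  have hGu : (0 : ℝ) < G.degree u := by
    obtain ⟨v, hv⟩ := card_pos.1 hpos
    exact_mod_cast G.degree_pos_iff_exists_adj u |>.2 ⟨v, hHG (mem_filter.1 hv).2⟩
  have hdegR : (G.degree u : ℝ) ≤ m * H.degreeIn T u := by exact_mod_cast hdeg
  have hm : (0 : ℝ) < m := pos_of_mul_pos_left (hGu.trans_le hdegR) (Nat.cast_nonneg _)
  calc c / m ≤ H.degreeIn T u * (c / G.degree u) := by
        rw [mul_div_assoc', div_le_div_iff₀ hm hGu]
        nlinarith [mul_le_mul_of_nonneg_left hdegR hc]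
    _ = ∑ v ∈ T, if H.Adj u v then c / G.degree u else 0 := by
        rw [sum_ite, sum_const_zero, add_zero, sum_const, nsmul_eq_mul]; rfl
    _ ≤ ∑ v ∈ T, if G.Adj u v then q s(u, v) else 0 := by
        refine sum_le_sum fun v _ => ?_
        by_cases hH : H.Adj u v
        · rw [if_pos hH, if_pos (hHG hH)]; exact hheavy v hH
        · split_ifs <;> simp [hq]

end SimpleGraph

open SimpleGraph

/-- Halving-progress lemma for the light-edge-association rule: if every nonempty
vertex subset `S` has weighted density strictly less than `α` under nonnegative
edge weights `q`, then fewer than half the edges `e = {u,v}` satisfy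
`q_e ≥ 8α/d_u` and `q_e ≥ 8α/d_v` at both endpoints. -/
theorem stmt9 {V : Type*} [Fintype V] [DecidableEq V]
    (G : SimpleGraph V) [DecidableRel G.Adj]
    (q : Sym2 V → ℝ) (hq : ∀ e, 0 ≤ q e) (α : ℝ)
    (hdens : ∀ S : Finset V, S.Nonempty →
      (1 / 2 : ℝ) * ∑ u ∈ S, ∑ v ∈ S, (if G.Adj u v then q s(u, v) else 0)
        < α * (S.card : ℝ))
    (hE : G.edgeFinset.Nonempty) :
    2 * (G.edgeFinset.filter
        (fun e => ∀ v ∈ e, 8 * α / (G.degree v : ℝ) ≤ q e)).card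
      < G.edgeFinset.card := by
  set H := G.deleteEdges {e | ¬ ∀ v ∈ e, 8 * α / (G.degree v : ℝ) ≤ q e}
  have hH : #H.edgeFinset = #(G.edgeFinset.filter
      fun e => ∀ v ∈ e, 8 * α / (G.degree v : ℝ) ≤ q e) := by
    congr 1
    ext e
    simp [H]
  by_contra! hhalf
  have hpos : 0 < ∑ v, H.degreeIn univ v := by
    rw [sum_degreeIn_univ, hH]
    have := card_pos.2 hE
    omega
  obtain ⟨T, -, ⟨v, hv⟩, hT⟩ :=
    H.exists_nonempty_subset_forall_le_mul_degreeIn (G.degree ·) 2 univ hpos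
      (by rw [sum_degrees_eq_twice_card_edges, sum_degreeIn_univ, hH]; omega)
  have hα : 0 ≤ α := by simpa using (hdens {v} (singleton_nonempty v)).le
  have hheavy (u w : V) (huw : H.Adj u w) : 8 * α / G.degree u ≤ q s(u, w) := by
    have := (deleteEdges_adj.1 huw).2
    simp only [Set.mem_ofPred_eq, not_not] at this
    exact this u (Sym2.mem_mk_left u w)
  have hvertex (u : V) (hu : u ∈ T) :
      2 * α ≤ ∑ w ∈ T, if G.Adj u w then q s(u, w) else 0 :=
    calc 2 * α = 8 * α / (2 * 2 : ℕ) := by norm_num; ring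
      _ ≤ _ := div_le_sum_ite_adj (G.deleteEdges_le _) hq (by positivity) (hheavy u)
          (hT u hu).1 (hT u hu).2
  have hsum := sum_le_sum hvertex
  rw [sum_const, nsmul_eq_mul] at hsum
  linarith [hdens T ⟨v, hv⟩]
end

section
/- Let E be a finite graph on n vertices with nonnegative edge weights q such that every nonempty S ⊆ V has weighted density less than α. Then there exists an assignment (orientation) of each edge to exactly one of its endpoints such that for every vertex v, the total q-weight of edges assigned to v is at most 8α · ⌈log₂(1 + |E|)⌉. -/
open scoped Classical
open Finset

private noncomputable def edgesIn {V : Type*} [Fintype V] [DecidableEq V]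
    (G : SimpleGraph V) [DecidableRel G.Adj] (S : Finset V) : Finset (Sym2 V) :=
  G.edgeFinset.filter (fun e => ∀ x ∈ e, x ∈ S)

private lemma sum_incident {V : Type*} [Fintype V] [DecidableEq V]
    (G : SimpleGraph V) [DecidableRel G.Adj] (q : Sym2 V → ℝ)
    (S : Finset V) (u : V) (hu : u ∈ S) :
    ∑ e ∈ (edgesIn G S).filter (fun e => u ∈ e), q e
      = ∑ v ∈ S.filter (fun v => G.Adj u v), q s(u, v) := by
  symm
  refine Finset.sum_bij' (fun v _ => s(u, v))
    (fun e he => Sym2.Mem.other' (Finset.mem_filter.mp he).2) ?_ ?_ ?_ ?_ ?_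
  · intro v hv
    obtain ⟨hvS, hadj⟩ := Finset.mem_filter.mp hv
    refine Finset.mem_filter.mpr ⟨Finset.mem_filter.mpr ⟨?_, ?_⟩, Sym2.mem_mk_left u v⟩
    · rw [SimpleGraph.mem_edgeFinset, SimpleGraph.mem_edgeSet]; exact hadj
    · intro x hx
      rcases Sym2.mem_iff.mp hx with rfl | rfl
      · exact hu
      · exact hvS
  · intro e he
    obtain ⟨heE, hue⟩ := Finset.mem_filter.mp he
    obtain ⟨heG, hmem⟩ := Finset.mem_filter.mp heE
    refine Finset.mem_filter.mpr ⟨hmem _ (Sym2.other_mem' hue), ?_⟩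
    rw [← SimpleGraph.mem_edgeSet, Sym2.other_spec' hue]
    exact SimpleGraph.mem_edgeFinset.mp heG
  · intro v hv
    exact Sym2.congr_right.mp (Sym2.other_spec' (Sym2.mem_mk_left u v))
  · intro e he
    exact Sym2.other_spec' (Finset.mem_filter.mp he).2
  · intro v hv; rfl

private lemma main_lemma {V : Type*} [Fintype V] [DecidableEq V]
    (G : SimpleGraph V) [DecidableRel G.Adj]
    (q : Sym2 V → ℝ) (hq : ∀ e, 0 ≤ q e) (α : ℝ) (hα : 0 < α)
    (hdens : ∀ S : Finset V, S.Nonempty →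
      (1 / 2 : ℝ) * ∑ u ∈ S, ∑ v ∈ S, (if G.Adj u v then q s(u, v) else 0)
        < α * (S.card : ℝ)) [Nonempty V] :
    ∀ S : Finset V, ∃ f : Sym2 V → V,
      (∀ e ∈ edgesIn G S, f e ∈ e) ∧
      ∀ v : V, ∑ e ∈ (edgesIn G S).filter (fun e => f e = v), q e ≤ 2 * α := by
  intro S
  induction S using Finset.strongInduction with
  | _ S ih =>
    rcases S.eq_empty_or_nonempty with rfl | hS
    · refine ⟨fun _ => Classical.arbitrary V, ?_, ?_⟩
      · intro e he
        obtain ⟨_, hmem⟩ := Finset.mem_filter.mp he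
        exfalso
        induction e using Sym2.ind with
        | _ a b => exact absurd (hmem a (Sym2.mem_mk_left a b)) (by simp)
      · intro v
        have hsub : (edgesIn G ∅).filter (fun e => (fun _ => Classical.arbitrary V) e = v) = ∅ := by
          rw [Finset.eq_empty_iff_forall_notMem]
          intro e he
          obtain ⟨he', _⟩ := Finset.mem_filter.mp he
          obtain ⟨_, hmem⟩ := Finset.mem_filter.mp he'
          induction e using Sym2.ind with
          | _ a b => exact absurd (hmem a (Sym2.mem_mk_left a b)) (by simp)
        rw [hsub]
        simp
        positivity
    · -- find a vertex of weighted degree < 2α inside S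
      have hd := hdens S hS
      have hsum : ∑ u ∈ S, ∑ v ∈ S, (if G.Adj u v then q s(u, v) else 0)
          < ∑ u ∈ S, (2 * α) := by
        rw [Finset.sum_const, nsmul_eq_mul]
        nlinarith [hd]
      obtain ⟨u, huS, hu⟩ := Finset.exists_lt_of_sum_lt hsum
      -- inner sum equals the incident-edge sum
      have hincid : ∑ e ∈ (edgesIn G S).filter (fun e => u ∈ e), q e < 2 * α := by
        rw [sum_incident G q S u huS]
        calc ∑ v ∈ S.filter (fun v => G.Adj u v), q s(u, v)
            = ∑ v ∈ S, (if G.Adj u v then q s(u, v) else 0) := by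
              rw [Finset.sum_filter]
          _ < 2 * α := hu
      obtain ⟨f', hf'mem, hf'load⟩ := ih (S.erase u) (Finset.erase_ssubset huS)
      refine ⟨fun e => if u ∈ e then u else f' e, ?_, ?_⟩
      · intro e he
        by_cases hue : u ∈ e
        · simp [hue]
        · simp only [hue, if_false]
          refine hf'mem e ?_
          obtain ⟨heG, hmem⟩ := Finset.mem_filter.mp he
          refine Finset.mem_filter.mpr ⟨heG, ?_⟩
          intro x hx
          refine Finset.mem_erase.mpr ⟨?_, hmem x hx⟩
          rintro rfl; exact hue hx
      · intro v
        by_cases hv : v = u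
        · subst hv
          refine le_of_lt (lt_of_le_of_lt ?_ hincid)
          apply Finset.sum_le_sum_of_subset_of_nonneg
          · intro e he
            obtain ⟨heS, hfe⟩ := Finset.mem_filter.mp he
            refine Finset.mem_filter.mpr ⟨heS, ?_⟩
            by_contra hue
            simp only [hue, if_false] at hfe
            -- then f' e = v = u, but f' e ∈ e ⊆ S.erase u
            have heS' : e ∈ edgesIn G (S.erase v) := by
              obtain ⟨heG, hmem⟩ := Finset.mem_filter.mp heS
              refine Finset.mem_filter.mpr ⟨heG, fun x hx => Finset.mem_erase.mpr ⟨?_, hmem x hx⟩⟩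
              rintro rfl; exact hue hx
            have := hf'mem e heS'
            rw [hfe] at this
            exact hue this
          · intro e _ _; exact hq e
        · refine le_trans ?_ (hf'load v)
          apply Finset.sum_le_sum_of_subset_of_nonneg
          · intro e he
            obtain ⟨heS, hfe⟩ := Finset.mem_filter.mp he
            have hue : ¬ u ∈ e := by
              intro hue
              simp only [hue, if_true] at hfe
              exact hv hfe.symm
            simp only [hue, if_false] at hfe
            obtain ⟨heG, hmem⟩ := Finset.mem_filter.mp heS
            refine Finset.mem_filter.mpr ⟨Finset.mem_filter.mpr ⟨heG,
              fun x hx => Finset.mem_erase.mpr ⟨?_, hmem x hx⟩⟩, hfe⟩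
            rintro rfl; exact hue hx
          · intro e _ _; exact hq e

/-- Existence of a light edge association: if every nonempty `S ⊆ V` has weighted
density less than `α` under nonnegative edge weights `q`, then there is an
assignment of each edge to one of its endpoints such that every vertex receives
total weight at most `8α ⌈log₂(1 + |E|)⌉`. -/
theorem stmt11 {V : Type*} [Fintype V] [DecidableEq V]
    (G : SimpleGraph V) [DecidableRel G.Adj]
    (q : Sym2 V → ℝ) (hq : ∀ e, 0 ≤ q e) (α : ℝ) (hα : 0 < α)
    (hdens : ∀ S : Finset V, S.Nonempty →
      (1 / 2 : ℝ) * ∑ u ∈ S, ∑ v ∈ S, (if G.Adj u v then q s(u, v) else 0)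
        < α * (S.card : ℝ)) :
    ∃ f : Sym2 V → V,
      (∀ e ∈ G.edgeFinset, f e ∈ e) ∧
      ∀ v : V, ∑ e ∈ G.edgeFinset.filter (fun e => f e = v), q e
        ≤ 8 * α * (Nat.clog 2 (1 + G.edgeFinset.card) : ℝ) := by
  cases isEmpty_or_nonempty V with
  | inl h =>
    haveI : IsEmpty (Sym2 V) := ⟨fun z => Sym2.ind (fun a _ => isEmptyElim a) z⟩
    exact ⟨isEmptyElim, fun e => isEmptyElim e, fun v => isEmptyElim v⟩
  | inr h =>
    obtain ⟨f, hfmem, hfload⟩ := main_lemma G q hq α hα hdens Finset.univ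
    have huniv : edgesIn G Finset.univ = G.edgeFinset := by
      apply Finset.filter_true_of_mem
      intro e _ x _
      exact Finset.mem_univ x
    rw [huniv] at hfmem hfload
    refine ⟨f, hfmem, fun v => ?_⟩
    rcases Finset.eq_empty_or_nonempty G.edgeFinset with he | he
    · simp [he, Nat.clog_one_right]
    · refine le_trans (hfload v) ?_
      have h1 : (1 : ℝ) ≤ (Nat.clog 2 (1 + G.edgeFinset.card) : ℝ) := by
        have h2 : 0 < Nat.clog 2 (1 + G.edgeFinset.card) :=
          Nat.clog_pos one_lt_two (by have := Finset.card_pos.mpr he; omega)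
        exact_mod_cast h2
      nlinarith
end
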